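/- Let 1 ≤ m ≤ n and let V₁, …, V_m be an admissible family on H = ℓ²(ℕⁿ; ℂ) (with Vᵢ a variable-i inner multiplier). Set Pⱼ := VⱼVⱼ* and Qⱼ := I − Pⱼ for 2 ≤ j ≤ m, and define T := V₁ Q₂ ⋯ Q_m + P₂ Q₃ ⋯ Q_m + ⋯ + P_{m−1} Q_m + P_m. Then T is an isometry on H, and the smallest closed subspace of H containing S₁^l(ran T) for every l ≥ 0 — that is, the closed linear span of ⋃_{l ≥ 0} S₁^l(T H) — equals ran V₁ + ran V₂ + ⋯ + ran V_m. (Thus T implements the Beurling–Lax–Halmos representing inner function of the co-doubly commuting submodule ran V₁ + ⋯ + ran V_m, viewed as a submodule of H²_{H²(𝔻^{n−1})}(𝔻).) -/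

import Mathlib

open ContinuousLinearMap

noncomputable section

/-- `ℓ²(ℕⁿ; ℂ)`, identified with the Hardy space `H²(𝔻ⁿ)` via Taylor coefficients. -/
abbrev HardyH (n : ℕ) : Type := lp (fun _ : Fin n → ℕ => ℂ) 2

/-- `T` is the `i`-th coordinate unilateral shift (multiplication by `zᵢ` on `H²(𝔻ⁿ)`):
`(T f) α = f (α − εᵢ)` if `αᵢ ≥ 1`, and `0` otherwise. -/
def IsShift (n : ℕ) (i : Fin n) (T : HardyH n →L[ℂ] HardyH n) : Prop :=
  ∀ (f : HardyH n) (α : Fin n → ℕ),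
    T f α = if 0 < α i then f (α - Pi.single i 1) else 0

/-- The standard basis vector at the zero multi-index (the constant function `1`). -/
def e₀ (n : ℕ) : HardyH n := lp.single 2 0 1

/-- `V` is a variable-`i` inner multiplier: an isometry commuting with every shift and
with the adjoints of the shifts in all the other variables (these are exactly the
multiplication operators by one-variable inner functions `Θ(zᵢ)`). -/
def IsInnerMult (n : ℕ) (i : Fin n) (Sh : Fin n → HardyH n →L[ℂ] HardyH n)
    (V : HardyH n →L[ℂ] HardyH n) : Prop :=
  adjoint V * V = 1 ∧ (∀ j, V * Sh j = Sh j * V) ∧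
    ∀ j, j ≠ i → V * adjoint (Sh j) = adjoint (Sh j) * V

/-- An admissible family: `Sh` are the coordinate shifts, each `V i` is a variable-`i`
inner multiplier, and the `V i` doubly commute with each other. -/
def IsAdmissible {n : ℕ} (Sh V : Fin n → HardyH n →L[ℂ] HardyH n) : Prop :=
  (∀ i, IsShift n i (Sh i)) ∧ (∀ i, IsInnerMult n i Sh (V i)) ∧
  (∀ i j, i ≠ j → V i * V j = V j * V i) ∧
  (∀ i j, i ≠ j → adjoint (V i) * V j = V j * adjoint (V i))

/-!
Write `Pⱼ = VⱼVⱼ*`, `Qⱼ = 1 - Pⱼ` and `Dₖ = Qₖ ⋯ Q_{m-1}`, indices starting at `0`. The `Pⱼ` are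
commuting projections, so each `Dₖ` is a projection. Since `PₖDₖ₊₁ = Dₖ₊₁ - Dₖ`, the tail
`∑_{j ≥ 1} PⱼDⱼ₊₁` of `T` telescopes to `1 - D₁`, so `T = V₀D₁ + (1 - D₁)` with `D₁` commuting
with `V₀`. Hence `T` is an isometry with `TT* = 1 - D₀`, and `ran T = ker D₀` is closed. Moreover
`ker D₀ = ran V₀ + ⋯ + ran V_{m-1}`, because `D₀Vⱼ = 0` and `1 - D₀ = ∑ⱼ Vⱼ(Vⱼ*Dⱼ₊₁)`. This sum
is invariant under `S₁`, which commutes with every `Vⱼ`, so the spaces `S₁ˡ(ran T)` add nothing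
to `ran T`.
-/

section StarRing

variable {R : Type*}

theorem List.prod_mul_eq_prod_of_mem [Monoid R] {l : List R}
    (hl : ∀ p ∈ l, IsIdempotentElem p) (hc : l.Pairwise Commute) {q : R} (hq : q ∈ l) :
    l.prod * q = l.prod := by
  induction l with
  | nil => simp at hq
  | cons a l ih =>
    rw [List.pairwise_cons] at hc
    rcases List.mem_cons.1 hq with rfl | hq
    · rw [List.prod_cons, mul_assoc, ← (Commute.list_prod_right l q hc.1).eq, ← mul_assoc,
        (hl q List.mem_cons_self).eq]
    · rw [List.prod_cons, mul_assoc,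
        ih (fun p hp => hl p (List.mem_cons_of_mem a hp)) hc.2 hq]

theorem List.isStarProjection_prod [Semiring R] [StarRing R] {l : List R}
    (hl : ∀ p ∈ l, IsStarProjection p) (hc : l.Pairwise Commute) : IsStarProjection l.prod := by
  induction l with
  | nil => exact IsStarProjection.one R
  | cons a l ih =>
    rw [List.pairwise_cons] at hc
    exact (hl a List.mem_cons_self).mul (ih (fun p hp => hl p (List.mem_cons_of_mem a hp)) hc.2)
      (Commute.list_prod_right l a hc.1)

variable [Ring R] [StarRing R]

theorem isStarProjection_mul_star_of_star_mul_self {v : R} (hv : star v * v = 1) :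
    IsStarProjection (v * star v) where
  isIdempotentElem := by rw [IsIdempotentElem, mul_assoc, ← mul_assoc (star v), hv, one_mul]
  isSelfAdjoint := IsSelfAdjoint.mul_star_self v

namespace IsStarProjection

variable {p v : R}

theorem star_mul_self_mul_add_one_sub (hp : IsStarProjection p) (hv : star v * v = 1)
    (hpv : Commute p v) : star (v * p + (1 - p)) * (v * p + (1 - p)) = 1 := by
  have hpv' : p * star v = star v * p := by
    simpa [hp.isSelfAdjoint.star_eq] using hpv.star_star.eq
  rw [star_add, star_mul, star_sub, star_one, hp.isSelfAdjoint.star_eq]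
  calc (p * star v + (1 - p)) * (v * p + (1 - p))
      = p * (star v * v) * p + (p * star v) * (1 - p) + (1 - p) * v * p + (1 - p) * (1 - p) := by
        noncomm_ring
    _ = p * p + star v * (p * (1 - p)) + v * ((1 - p) * p) + (1 - p) * (1 - p) := by
        rw [hv, hpv', ((Commute.one_left v).sub_left hpv).eq]
        noncomm_ring
    _ = 1 := by
        rw [hp.mul_one_sub_self, hp.one_sub_mul_self, hp.isIdempotentElem.eq,
          hp.one_sub.isIdempotentElem.eq]
        noncomm_ring

theorem mul_add_one_sub_mul_star_self (hp : IsStarProjection p) (hpv : Commute p v) :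
    (v * p + (1 - p)) * star (v * p + (1 - p)) = 1 - (1 - v * star v) * p := by
  have hpv' : p * star v = star v * p := by
    simpa [hp.isSelfAdjoint.star_eq] using hpv.star_star.eq
  rw [star_add, star_mul, star_sub, star_one, hp.isSelfAdjoint.star_eq]
  calc (v * p + (1 - p)) * (p * star v + (1 - p))
      = v * (p * p * star v) + v * (p * (1 - p)) + (1 - p) * p * star v + (1 - p) * (1 - p) := by
        noncomm_ring
    _ = 1 - (1 - v * star v) * p := by
        rw [hp.mul_one_sub_self, hp.one_sub_mul_self, hp.isIdempotentElem.eq,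
          hp.one_sub.isIdempotentElem.eq, hpv']
        noncomm_ring

end IsStarProjection

end StarRing

section DoublyCommuting

variable {R : Type*} [Ring R] [StarRing R]

structure IsDoublyCommutingIsometries {ι : Type*} (V : ι → R) : Prop where
  star_mul_self : ∀ i, star (V i) * V i = 1
  commute : ∀ i j, i ≠ j → Commute (V i) (V j)
  commute_star : ∀ i j, i ≠ j → Commute (star (V i)) (V j)

namespace IsDoublyCommutingIsometries

variable {ι : Type*} {V : ι → R} (hV : IsDoublyCommutingIsometries V)
include hV

theorem isStarProjection_mul_star (i : ι) : IsStarProjection (V i * star (V i)) :=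
  isStarProjection_mul_star_of_star_mul_self (hV.star_mul_self i)

theorem commute_mul_star {i j : ι} (hij : i ≠ j) : Commute (V i) (V j * star (V j)) :=
  (hV.commute i j hij).mul_right (hV.commute_star j i hij.symm).symm

theorem commute_star_mul_star {i j : ι} (hij : i ≠ j) :
    Commute (star (V i)) (V j * star (V j)) :=
  (hV.commute_star i j hij).mul_right (hV.commute i j hij).star_star

theorem commute_mul_star_mul_star (i j : ι) :
    Commute (V i * star (V i)) (V j * star (V j)) := by
  rcases eq_or_ne i j with rfl | hij
  · rfl
  · exact (hV.commute_mul_star hij).mul_left (hV.commute_star_mul_star hij)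

end IsDoublyCommutingIsometries

variable {m : ℕ}

/-- `Qₖ Qₖ₊₁ ⋯ Q_{m-1}` with `Qⱼ = 1 - Vⱼ Vⱼ*`, indices starting at `0`. -/
def complProjProd (V : Fin m → R) (k : ℕ) : R :=
  ((List.ofFn fun j : Fin m => 1 - V j * star (V j)).drop k).prod

/-- The operator `T` of the theorem, with indices shifted down by one. -/
def blhOperator (V : Fin m → R) (hm : 1 ≤ m) : R :=
  V ⟨0, hm⟩ * complProjProd V 1
    + ∑ j ∈ Finset.univ.filter (fun j : Fin m => 0 < j.val),
        V j * star (V j) * complProjProd V (j.val + 1)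

variable (V : Fin m → R)

theorem complProjProd_of_le {k : ℕ} (hk : m ≤ k) : complProjProd V k = 1 := by
  rw [complProjProd, List.drop_eq_nil_of_le (by simpa using hk), List.prod_nil]

theorem complProjProd_eq_mul {k : ℕ} (hk : k < m) :
    complProjProd V k = (1 - V ⟨k, hk⟩ * star (V ⟨k, hk⟩)) * complProjProd V (k + 1) := by
  rw [complProjProd, List.drop_eq_getElem_cons (by simpa using hk), List.prod_cons,
    List.getElem_ofFn, complProjProd]

theorem mul_star_mul_complProjProd_succ (j : Fin m) :
    V j * star (V j) * complProjProd V (j + 1) = complProjProd V (j + 1) - complProjProd V j := by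
  rw [complProjProd_eq_mul V j.isLt, sub_mul, one_mul, sub_sub_cancel]

theorem sum_mul_star_mul_complProjProd :
    ∑ j : Fin m, V j * star (V j) * complProjProd V (j + 1) = 1 - complProjProd V 0 := by
  simp only [mul_star_mul_complProjProd_succ]
  rw [Fin.sum_univ_eq_sum_range (fun i => complProjProd V (i + 1) - complProjProd V i),
    Finset.sum_range_sub, complProjProd_of_le V le_rfl]

theorem blhOperator_eq (hm : 1 ≤ m) :
    blhOperator V hm = V ⟨0, hm⟩ * complProjProd V 1 + (1 - complProjProd V 1) := by
  have hzero : Finset.univ.filter (fun j : Fin m => ¬ 0 < j.val) = {⟨0, hm⟩} := by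
    ext j; simp [Fin.ext_iff]
  have hsplit := Finset.sum_filter_add_sum_filter_not Finset.univ (fun j : Fin m => 0 < j.val)
    fun j => V j * star (V j) * complProjProd V (j + 1)
  rw [hzero, Finset.sum_singleton, mul_star_mul_complProjProd_succ,
    sum_mul_star_mul_complProjProd] at hsplit
  rw [blhOperator, eq_sub_of_add_eq hsplit]
  abel

namespace IsDoublyCommutingIsometries

variable {V} (hV : IsDoublyCommutingIsometries V)
include hV

theorem pairwise_commute_one_sub :
    (List.ofFn fun j : Fin m => 1 - V j * star (V j)).Pairwise Commute :=
  List.pairwise_ofFn.2 fun i j _ =>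
    ((Commute.one_left _).sub_left ((Commute.one_right _).sub_right
      (hV.commute_mul_star_mul_star i j)))

theorem isStarProjection_complProjProd (k : ℕ) : IsStarProjection (complProjProd V k) := by
  refine List.isStarProjection_prod (fun p hp => ?_)
    (hV.pairwise_commute_one_sub.sublist (List.drop_sublist _ _))
  obtain ⟨j, rfl⟩ := List.mem_ofFn.1 (List.mem_of_mem_drop hp)
  exact (hV.isStarProjection_mul_star j).one_sub

theorem complProjProd_zero_mul (j : Fin m) : complProjProd V 0 * V j = 0 := by
  have hmem : 1 - V j * star (V j) ∈ List.ofFn fun j : Fin m => 1 - V j * star (V j) :=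
    List.mem_ofFn.2 ⟨j, rfl⟩
  have habsorb := List.prod_mul_eq_prod_of_mem (fun p hp => (List.mem_ofFn.1 hp).elim
    fun i hi => hi ▸ (hV.isStarProjection_mul_star i).one_sub.isIdempotentElem)
    hV.pairwise_commute_one_sub hmem
  rw [complProjProd, List.drop_zero, ← habsorb, mul_assoc, sub_mul, one_mul, mul_assoc,
    hV.star_mul_self, mul_one, sub_self, mul_zero]

theorem commute_complProjProd_one (hm : 1 ≤ m) : Commute (complProjProd V 1) (V ⟨0, hm⟩) := by
  refine Commute.list_prod_left _ _ fun x hx => ?_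
  obtain ⟨j, hj, rfl⟩ := List.mem_drop_iff_getElem.1 hx
  rw [List.getElem_ofFn]
  have hne : (⟨0, hm⟩ : Fin m) ≠ ⟨1 + j, by simp at hj; omega⟩ := by
    simp [Fin.ext_iff]; omega
  exact (Commute.one_left _).sub_left (hV.commute_mul_star hne).symm

theorem star_blhOperator_mul_self (hm : 1 ≤ m) :
    star (blhOperator V hm) * blhOperator V hm = 1 := by
  rw [blhOperator_eq]
  exact (hV.isStarProjection_complProjProd 1).star_mul_self_mul_add_one_sub (hV.star_mul_self _)
    (hV.commute_complProjProd_one hm)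

theorem blhOperator_mul_star_self (hm : 1 ≤ m) :
    blhOperator V hm * star (blhOperator V hm) = 1 - complProjProd V 0 := by
  rw [blhOperator_eq, (hV.isStarProjection_complProjProd 1).mul_add_one_sub_mul_star_self
    (hV.commute_complProjProd_one hm), complProjProd_eq_mul V hm]

end IsDoublyCommutingIsometries

end DoublyCommuting

theorem Submodule.sum_le_iff {R M ι : Type*} [Semiring R] [AddCommMonoid M] [Module R M]
    {s : Finset ι} {p : ι → Submodule R M} {q : Submodule R M} :
    ∑ i ∈ s, p i ≤ q ↔ ∀ i ∈ s, p i ≤ q :=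
  ⟨fun h _ hi => (Finset.single_le_sum (fun _ _ => zero_le) hi).trans h,
    fun h => Finset.sum_induction _ (· ≤ q) (fun _ _ => sup_le) bot_le h⟩

namespace ContinuousLinearMap

section Semiring

variable {R M : Type*} [Semiring R] [TopologicalSpace M] [AddCommMonoid M] [Module R M]

theorem sum_range_le_comap_of_commute {ι : Type*} [Fintype ι] (V : ι → M →L[R] M)
    {S : M →L[R] M} (hS : ∀ i, Commute (V i) S) :
    ∑ i, LinearMap.range (V i : M →ₗ[R] M)
      ≤ (∑ i, LinearMap.range (V i : M →ₗ[R] M)).comap (S : M →ₗ[R] M) := by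
  refine Submodule.sum_le_iff.2 fun i _ => ?_
  rintro _ ⟨y, rfl⟩
  rw [Submodule.mem_comap, coe_coe, coe_coe,
    ← show V i (S y) = S (V i y) from congr($((hS i).eq) y)]
  exact Submodule.sum_le_iff.1 le_rfl i (Finset.mem_univ i) ⟨S y, rfl⟩

theorem iSup_range_pow_mul {S T : M →L[R] M}
    (hS : LinearMap.range (T : M →ₗ[R] M)
      ≤ (LinearMap.range (T : M →ₗ[R] M)).comap (S : M →ₗ[R] M)) :
    ⨆ l : ℕ, LinearMap.range ((S ^ l * T : M →L[R] M) : M →ₗ[R] M)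
      = LinearMap.range (T : M →ₗ[R] M) := by
  refine le_antisymm (iSup_le fun l => ?_) (le_iSup_of_le 0 (by simp))
  induction l with
  | zero => simp
  | succ l ih =>
    rintro _ ⟨y, rfl⟩
    rw [pow_succ', mul_assoc]
    exact hS (ih ⟨y, rfl⟩)

end Semiring

theorem range_eq_ker_of_mul_eq_one_sub {R M : Type*} [Ring R] [TopologicalSpace M]
    [AddCommGroup M] [IsTopologicalAddGroup M] [Module R M] {T T' D : M →L[R] M}
    (hT : T' * T = 1) (hD : T * T' = 1 - D) :
    LinearMap.range (T : M →ₗ[R] M) = LinearMap.ker (D : M →ₗ[R] M) := by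
  have hDT : D * T = 0 := by
    rw [show D = 1 - T * T' by rw [hD, sub_sub_cancel], sub_mul, mul_assoc, hT, one_mul,
      mul_one, sub_self]
  ext x
  constructor
  · rintro ⟨y, rfl⟩
    exact congr($hDT y)
  · intro hx
    have hx0 : D x = 0 := hx
    refine ⟨T' x, ?_⟩
    simpa [hx0] using congr($hD x)

end ContinuousLinearMap

namespace IsDoublyCommutingIsometries

variable {𝕜 E : Type*} [RCLike 𝕜] [NormedAddCommGroup E] [InnerProductSpace 𝕜 E] [CompleteSpace E]
  {m : ℕ} {V : Fin m → E →L[𝕜] E} (hV : IsDoublyCommutingIsometries V)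
include hV

theorem ker_complProjProd_zero :
    LinearMap.ker ((complProjProd V 0 : E →L[𝕜] E) : E →ₗ[𝕜] E)
      = ∑ i, LinearMap.range (V i : E →ₗ[𝕜] E) := by
  refine le_antisymm (fun x hx => ?_) (Submodule.sum_le_iff.2 fun i _ => ?_)
  · have hx' : x = ∑ j, V j ((star (V j) * complProjProd V (j + 1)) x) := by
      have hx0 : complProjProd V 0 x = 0 := hx
      simpa [hx0] using congr($(sum_mul_star_mul_complProjProd V) x).symm
    rw [hx']
    exact Submodule.sum_mem _ fun j _ =>
      Submodule.sum_le_iff.1 le_rfl j (Finset.mem_univ j) ⟨_, rfl⟩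
  · rintro _ ⟨y, rfl⟩
    exact congr($(hV.complProjProd_zero_mul i) y)

theorem range_blhOperator (hm : 1 ≤ m) :
    LinearMap.range ((blhOperator V hm : E →L[𝕜] E) : E →ₗ[𝕜] E)
      = ∑ i, LinearMap.range (V i : E →ₗ[𝕜] E) := by
  rw [range_eq_ker_of_mul_eq_one_sub (hV.star_blhOperator_mul_self hm)
    (hV.blhOperator_mul_star_self hm), hV.ker_complProjProd_zero]

end IsDoublyCommutingIsometries

theorem blh_inner_function_of_co_doubly_commuting_general
    {n m : ℕ} (hm : 1 ≤ m) (hmn : m ≤ n)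
    (Sh : Fin n → HardyH n →L[ℂ] HardyH n)
    (V : Fin m → HardyH n →L[ℂ] HardyH n)
    (hV : ∀ i : Fin m, IsInnerMult n (Fin.castLE hmn i) Sh (V i))
    (hVV : ∀ i j : Fin m, i ≠ j → V i * V j = V j * V i)
    (hVVa : ∀ i j : Fin m, i ≠ j → adjoint (V i) * V j = V j * adjoint (V i)) :
    adjoint (V ⟨0, hm⟩ * ((List.ofFn fun j : Fin m => 1 - V j * adjoint (V j)).drop 1).prod
        + ∑ j ∈ Finset.univ.filter (fun j : Fin m => 0 < j.val),
            (V j * adjoint (V j))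
              * ((List.ofFn fun k : Fin m => 1 - V k * adjoint (V k)).drop (j.val + 1)).prod)
      * (V ⟨0, hm⟩ * ((List.ofFn fun j : Fin m => 1 - V j * adjoint (V j)).drop 1).prod
        + ∑ j ∈ Finset.univ.filter (fun j : Fin m => 0 < j.val),
            (V j * adjoint (V j))
              * ((List.ofFn fun k : Fin m => 1 - V k * adjoint (V k)).drop (j.val + 1)).prod)
      = 1 ∧
    (⨆ l : ℕ, LinearMap.range
        (((Sh (Fin.castLE hmn ⟨0, hm⟩) ^ l
          * (V ⟨0, hm⟩ * ((List.ofFn fun j : Fin m => 1 - V j * adjoint (V j)).drop 1).prod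
            + ∑ j ∈ Finset.univ.filter (fun j : Fin m => 0 < j.val),
                (V j * adjoint (V j))
                  * ((List.ofFn fun k : Fin m => 1 - V k * adjoint (V k)).drop (j.val + 1)).prod)
          : HardyH n →L[ℂ] HardyH n) : HardyH n →ₗ[ℂ] HardyH n))
      : Submodule ℂ (HardyH n)).topologicalClosure
      = ∑ i, LinearMap.range (V i : HardyH n →ₗ[ℂ] HardyH n) := by
  simp only [← star_eq_adjoint] at hVVa ⊢
  have hDC : IsDoublyCommutingIsometries V :=
    ⟨fun i => by simpa only [← star_eq_adjoint] using (hV i).1, hVV, hVVa⟩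
  change star (blhOperator V hm) * blhOperator V hm = 1 ∧
    (⨆ l : ℕ, LinearMap.range ((Sh (Fin.castLE hmn ⟨0, hm⟩) ^ l * blhOperator V hm
      : HardyH n →L[ℂ] HardyH n) : HardyH n →ₗ[ℂ] HardyH n)).topologicalClosure = _
  have hrange := hDC.range_blhOperator hm
  refine ⟨hDC.star_blhOperator_mul_self hm, ?_⟩
  rw [iSup_range_pow_mul (hrange ▸ sum_range_le_comap_of_commute V fun i => (hV i).2.1 _),
    hrange, ← hDC.ker_complProjProd_zero, (isClosed_ker _).submodule_topologicalClosure_eq]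

/-- Let `1 ≤ m ≤ n` and let `V₁, …, V_m` be an admissible family (`Vᵢ` a
variable-`i` inner multiplier).  With `Pⱼ = VⱼVⱼ*` and `Qⱼ = I − Pⱼ`, the operator
`T = V₁ Q₂⋯Q_m + P₂ Q₃⋯Q_m + ⋯ + P_{m−1} Q_m + P_m`
is an isometry on `H`, and the smallest closed subspace containing `S₁ˡ (ran T)` for all
`l ≥ 0` — the topological closure of `⨆ l, ran (S₁ˡ T)` — equals `ran V₁ + ⋯ + ran V_m`.
Thus `T` implements the Beurling–Lax–Halmos representing inner function of this co-doubly
commuting submodule viewed inside `H²_{H²(𝔻^{n−1})}(𝔻)`. -/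
theorem blh_inner_function_of_co_doubly_commuting
    {n m : ℕ} (hm : 1 ≤ m) (hmn : m ≤ n)
    (Sh : Fin n → HardyH n →L[ℂ] HardyH n) (hSh : ∀ i, IsShift n i (Sh i))
    (V : Fin m → HardyH n →L[ℂ] HardyH n)
    (hV : ∀ i : Fin m, IsInnerMult n (Fin.castLE hmn i) Sh (V i))
    (hVV : ∀ i j : Fin m, i ≠ j → V i * V j = V j * V i)
    (hVVa : ∀ i j : Fin m, i ≠ j → adjoint (V i) * V j = V j * adjoint (V i)) :
    adjoint (V ⟨0, hm⟩ * ((List.ofFn fun j : Fin m => 1 - V j * adjoint (V j)).drop 1).prod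
        + ∑ j ∈ Finset.univ.filter (fun j : Fin m => 0 < j.val),
            (V j * adjoint (V j))
              * ((List.ofFn fun k : Fin m => 1 - V k * adjoint (V k)).drop (j.val + 1)).prod)
      * (V ⟨0, hm⟩ * ((List.ofFn fun j : Fin m => 1 - V j * adjoint (V j)).drop 1).prod
        + ∑ j ∈ Finset.univ.filter (fun j : Fin m => 0 < j.val),
            (V j * adjoint (V j))
              * ((List.ofFn fun k : Fin m => 1 - V k * adjoint (V k)).drop (j.val + 1)).prod)
      = 1 ∧
    (⨆ l : ℕ, LinearMap.range
        (((Sh (Fin.castLE hmn ⟨0, hm⟩) ^ l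
          * (V ⟨0, hm⟩ * ((List.ofFn fun j : Fin m => 1 - V j * adjoint (V j)).drop 1).prod
            + ∑ j ∈ Finset.univ.filter (fun j : Fin m => 0 < j.val),
                (V j * adjoint (V j))
                  * ((List.ofFn fun k : Fin m => 1 - V k * adjoint (V k)).drop (j.val + 1)).prod)
          : HardyH n →L[ℂ] HardyH n) : HardyH n →ₗ[ℂ] HardyH n))
      : Submodule ℂ (HardyH n)).topologicalClosure
      = ∑ i, LinearMap.range (V i : HardyH n →ₗ[ℂ] HardyH n) :=
  blh_inner_function_of_co_doubly_commuting_general hm hmn Sh V hV hVV hVVa
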